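/- A trace τ is a trace of system S if and only if τ is a FIFO trace and, for every peer i, the projection of τ onto the actions of peer i is a word accepted by the automaton P_i (where all states are accepting). -/
import Mathlib


/-! Communicating finite state machines: messages, traces, systems. -/

structure MessageSet where
  msgs : Finset ℕ
  p : ℕ
  src : ℕ → ℕ
  dst : ℕ → ℕ

def MessageSet.WF (M : MessageSet) : Prop :=
  1 ≤ M.p ∧ ∀ a ∈ M.msgs, M.src a ≠ M.dst a ∧ M.src a < M.p ∧ M.dst a < M.p

inductive Act where
  | send (a : ℕ)
  | recv (a : ℕ)
deriving DecidableEq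

abbrev Trace := List Act

def Act.msg : Act → ℕ
  | .send a => a
  | .recv a => a

def peerOf (M : MessageSet) : Act → ℕ
  | .send a => M.src a
  | .recv a => M.dst a

/-- Send projection: the sequence of messages sent in a trace. -/
def sendProj (τ : Trace) : List ℕ :=
  τ.filterMap (fun α => match α with | .send a => some a | .recv _ => none)

/-- Projection of a trace on the actions of peer `i`. -/
def projPeer (M : MessageSet) (i : ℕ) (τ : Trace) : Trace :=
  τ.filter (fun α => peerOf M α = i)

def sentOn (M : MessageSet) (i j : ℕ) (τ : Trace) : List ℕ :=
  τ.filterMap (fun α => match α with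
    | .send a => if M.src a = i ∧ M.dst a = j then some a else none
    | .recv _ => none)

def recvOn (M : MessageSet) (i j : ℕ) (τ : Trace) : List ℕ :=
  τ.filterMap (fun α => match α with
    | .recv a => if M.src a = i ∧ M.dst a = j then some a else none
    | .send _ => none)

/-- A trace is FIFO if on every channel, in every prefix, the receives form a
prefix of the sends. -/
def Fifo (M : MessageSet) (τ : Trace) : Prop :=
  ∀ τ', τ' <+: τ → ∀ i j, recvOn M i j τ' <+: sentOn M i j τ'

/-- `k`-bounded FIFO trace: the buffer of each channel never exceeds `k`. -/
def BoundedFifo (M : MessageSet) (k : ℕ) (τ : Trace) : Prop :=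
  Fifo M τ ∧ ∀ τ', τ' <+: τ → ∀ i j,
    (sentOn M i j τ').length ≤ (recvOn M i j τ').length + k

/-- `!?a₁ ⬝ !?a₂ ⋯ !?aₙ` -/
def syncOf (l : List ℕ) : Trace := l.flatMap (fun a => [Act.send a, Act.recv a])

def Synchronous (τ : Trace) : Prop := ∃ l : List ℕ, τ = syncOf l

def CausalEquiv (M : MessageSet) (τ₁ τ₂ : Trace) : Prop :=
  Fifo M τ₁ ∧ Fifo M τ₂ ∧ ∀ i, projPeer M i τ₁ = projPeer M i τ₂

/-- A system of communicating machines: for each peer `i`, an initial state and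
a transition relation (all states are accepting). -/
structure System where
  init : ℕ → ℕ
  delta : ℕ → ℕ → Act → ℕ → Prop

/-- Well-formedness: peer `i` performs only actions of peer `i`, on messages of `M`. -/
def System.WF (S : System) (M : MessageSet) : Prop :=
  ∀ i q α q', S.delta i q α q' → peerOf M α = i ∧ α.msg ∈ M.msgs

/-- The machines are finite-state. -/
def System.FiniteDelta (S : System) : Prop :=
  Set.Finite {x : ℕ × ℕ × Act × ℕ | S.delta x.1 x.2.1 x.2.2.1 x.2.2.2}

/-- A configuration: local states, and one FIFO buffer per channel `(i,j)`. -/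
abbrev Config := (ℕ → ℕ) × (ℕ → ℕ → List ℕ)

def Stable (c : Config) : Prop := ∀ i j, c.2 i j = []

def Step (M : MessageSet) (S : System) (c : Config) : Act → Config → Prop
  | .send a, c' =>
      S.delta (M.src a) (c.1 (M.src a)) (.send a) (c'.1 (M.src a)) ∧
      (∀ k, k ≠ M.src a → c'.1 k = c.1 k) ∧
      c'.2 (M.src a) (M.dst a) = c.2 (M.src a) (M.dst a) ++ [a] ∧
      (∀ k l, ¬(k = M.src a ∧ l = M.dst a) → c'.2 k l = c.2 k l)
  | .recv a, c' =>
      S.delta (M.dst a) (c.1 (M.dst a)) (.recv a) (c'.1 (M.dst a)) ∧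
      (∀ k, k ≠ M.dst a → c'.1 k = c.1 k) ∧
      c.2 (M.src a) (M.dst a) = a :: c'.2 (M.src a) (M.dst a) ∧
      (∀ k l, ¬(k = M.src a ∧ l = M.dst a) → c'.2 k l = c.2 k l)

inductive Exec (M : MessageSet) (S : System) : Config → Trace → Config → Prop
  | refl (c : Config) : Exec M S c [] c
  | step {c c' c'' : Config} {α : Act} {τ : Trace} :
      Step M S c α c' → Exec M S c' τ c'' → Exec M S c (α :: τ) c''

def initConfig (S : System) : Config := (S.init, fun _ _ => [])

def TraceOf (M : MessageSet) (S : System) (τ : Trace) : Prop :=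
  ∃ c, Exec M S (initConfig S) τ c

/-- `Trk M S 0` = synchronous traces; `Trk M S k` (`k ≥ 1`) = `k`-bounded traces. -/
def Trk (M : MessageSet) (S : System) : ℕ → Trace → Prop
  | 0, τ => TraceOf M S τ ∧ Synchronous τ
  | (k+1), τ => TraceOf M S τ ∧ BoundedFifo M (k+1) τ

def Trω (M : MessageSet) (S : System) (τ : Trace) : Prop := ∃ k, Trk M S k τ

/-- Two traces are `S`-equivalent if they lead from the initial configuration to
a common configuration. -/
def SEquiv (M : MessageSet) (S : System) (τ₁ τ₂ : Trace) : Prop :=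
  ∃ c, Exec M S (initConfig S) τ₁ c ∧ Exec M S (initConfig S) τ₂ c

/-- Send-trace language. -/
def STw (M : MessageSet) (S : System) (T : Trace → Prop) : Set (List ℕ) :=
  {w | ∃ τ, T τ ∧ sendProj τ = w}

/-- Send traces enriched with the reached stable configurations. -/
def STc (M : MessageSet) (S : System) (T : Trace → Prop) :
    Set (List ℕ ⊕ List ℕ × Config) :=
  {x | (∃ τ, T τ ∧ x = Sum.inl (sendProj τ)) ∨
       (∃ τ c, T τ ∧ Exec M S (initConfig S) τ c ∧ Stable c ∧
          x = Sum.inr (sendProj τ, c))}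

def kSync (M : MessageSet) (S : System) (k : ℕ) : Prop :=
  STc M S (Trk M S 0) = STc M S (Trk M S k)

def Synchronizable (M : MessageSet) (S : System) : Prop :=
  STc M S (Trk M S 0) = STc M S (Trω M S)

def LangSync (M : MessageSet) (S : System) : Prop :=
  STw M S (Trk M S 0) = STw M S (Trω M S)

inductive Shuffle : List Act → List Act → List Act → Prop
  | nil : Shuffle [] [] []
  | left {u v w : List Act} (a : Act) : Shuffle u v w → Shuffle (a :: u) v (a :: w)
  | right {u v w : List Act} (b : Act) : Shuffle u v w → Shuffle u (b :: v) (b :: w)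

inductive NShuffle : List ℕ → List ℕ → List ℕ → Prop
  | nil : NShuffle [] [] []
  | left {u v w : List ℕ} (a : ℕ) : NShuffle u v w → NShuffle (a :: u) v (a :: w)
  | right {u v w : List ℕ} (b : ℕ) : NShuffle u v w → NShuffle u (b :: v) (b :: w)

inductive PPath (S : System) (i : ℕ) : ℕ → Trace → Prop
  | nil (q : ℕ) : PPath S i q []
  | cons {q q' : ℕ} {α : Act} {w : Trace} :
      S.delta i q α q' → PPath S i q' w → PPath S i q (α :: w)

/-- The language of peer `i` (all states accepting). -/
def Lang (S : System) (i : ℕ) : Set Trace := {w | PPath S i (S.init i) w}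

def prefCl (L : Set Trace) : Set Trace := {w | ∃ v ∈ L, w <+: v}

def OrientedRing (M : MessageSet) : Prop :=
  1 ≤ M.p ∧ ∀ i j, (∃ a ∈ M.msgs, M.src a = i ∧ M.dst a = j) ↔
    (i < M.p ∧ j = (i + 1) % M.p)

section Aux

variable {M : MessageSet} {S : System}

lemma sentOn_send_cons (i j a : ℕ) (τ : Trace) :
    sentOn M i j (Act.send a :: τ) =
      if M.src a = i ∧ M.dst a = j then a :: sentOn M i j τ else sentOn M i j τ := by
  by_cases hc : M.src a = i ∧ M.dst a = j <;>
    simp [sentOn, List.filterMap_cons, hc]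

lemma sentOn_recv_cons (i j a : ℕ) (τ : Trace) :
    sentOn M i j (Act.recv a :: τ) = sentOn M i j τ := rfl

lemma recvOn_recv_cons (i j a : ℕ) (τ : Trace) :
    recvOn M i j (Act.recv a :: τ) =
      if M.src a = i ∧ M.dst a = j then a :: recvOn M i j τ else recvOn M i j τ := by
  by_cases hc : M.src a = i ∧ M.dst a = j <;>
    simp [recvOn, List.filterMap_cons, hc]

lemma recvOn_send_cons (i j a : ℕ) (τ : Trace) :
    recvOn M i j (Act.send a :: τ) = recvOn M i j τ := rfl

lemma projPeer_cons (i : ℕ) (α : Act) (τ : Trace) :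
    projPeer M i (α :: τ) =
      if peerOf M α = i then α :: projPeer M i τ else projPeer M i τ := by
  simp only [projPeer, List.filter_cons]
  split <;> simp_all

lemma exec_append {c c'' : Config} {τ₁ τ₂ : Trace}
    (h : Exec M S c (τ₁ ++ τ₂) c'') :
    ∃ c', Exec M S c τ₁ c' ∧ Exec M S c' τ₂ c'' := by
  induction τ₁ generalizing c with
  | nil => exact ⟨c, Exec.refl c, h⟩
  | cons α τ₁ ih =>
    cases h with
    | step h1 h2 =>
      obtain ⟨c', hc1, hc2⟩ := ih h2
      exact ⟨c', Exec.step h1 hc1, hc2⟩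

lemma exec_buffer {c c' : Config} {τ : Trace} (h : Exec M S c τ c') :
    ∀ i j, c.2 i j ++ sentOn M i j τ = recvOn M i j τ ++ c'.2 i j := by
  induction h with
  | refl c => simp [sentOn, recvOn]
  | @step c c' c'' α τ hstep _ ih =>
    intro i j
    cases α with
    | send a =>
      obtain ⟨_, _, hb, hb'⟩ := hstep
      rw [sentOn_send_cons, recvOn_send_cons]
      by_cases hc : M.src a = i ∧ M.dst a = j
      · obtain ⟨rfl, rfl⟩ := hc
        have := ih (M.src a) (M.dst a)
        rw [hb] at this
        rw [if_pos (⟨rfl, rfl⟩ : M.src a = M.src a ∧ M.dst a = M.dst a)]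
        rw [← this]; simp
      · rw [if_neg hc, ← ih i j, hb' i j (by tauto)]
    | recv a =>
      obtain ⟨_, _, hb, hb'⟩ := hstep
      rw [sentOn_recv_cons, recvOn_recv_cons]
      by_cases hc : M.src a = i ∧ M.dst a = j
      · obtain ⟨rfl, rfl⟩ := hc
        have := ih (M.src a) (M.dst a)
        rw [if_pos (⟨rfl, rfl⟩ : M.src a = M.src a ∧ M.dst a = M.dst a)]
        rw [hb, List.cons_append, this]; rfl
      · rw [if_neg hc, ← ih i j, hb' i j (by tauto)]

lemma exec_ppath (hS : S.WF M) {c c' : Config} {τ : Trace} (h : Exec M S c τ c') :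
    ∀ i, PPath S i (c.1 i) (projPeer M i τ) := by
  induction h with
  | refl c => intro i; exact PPath.nil _
  | @step c c' c'' α τ hstep _ ih =>
    intro i
    rw [projPeer_cons]
    cases α with
    | send a =>
      obtain ⟨hd, hst, _, _⟩ := hstep
      have hpeer : peerOf M (Act.send a) = M.src a := rfl
      by_cases hi : M.src a = i
      · subst hi
        rw [if_pos hpeer]
        exact PPath.cons hd (ih _)
      · rw [if_neg (by simpa [hpeer] using hi), ← hst i (Ne.symm hi)]
        exact ih i
    | recv a =>
      obtain ⟨hd, hst, _, _⟩ := hstep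
      have hpeer : peerOf M (Act.recv a) = M.dst a := rfl
      by_cases hi : M.dst a = i
      · subst hi
        rw [if_pos hpeer]
        exact PPath.cons hd (ih _)
      · rw [if_neg (by simpa [hpeer] using hi), ← hst i (Ne.symm hi)]
        exact ih i

lemma exec_of (hS : S.WF M) (τ : Trace) :
    ∀ c : Config,
    (∀ i, PPath S i (c.1 i) (projPeer M i τ)) →
    (∀ τ', τ' <+: τ → ∀ i j, recvOn M i j τ' <+: c.2 i j ++ sentOn M i j τ') →
    ∃ c', Exec M S c τ c' := by
  induction τ with
  | nil => intro c _ _; exact ⟨c, Exec.refl c⟩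
  | cons α τ ih =>
    intro c h1 h2
    cases α with
    | send a =>
      have hp := h1 (M.src a)
      rw [projPeer_cons, if_pos (show peerOf M (Act.send a) = M.src a from rfl)] at hp
      cases hp with
      | cons hd hrest =>
        rename_i q'
        set c' : Config := (Function.update c.1 (M.src a) q',
          fun k l => if k = M.src a ∧ l = M.dst a then c.2 k l ++ [a] else c.2 k l) with hc'
        have hstep : Step M S c (Act.send a) c' := by
          refine ⟨?_, ?_, ?_, ?_⟩
          · simpa [hc'] using hd
          · intro k hk; simp [hc', Function.update_of_ne hk]
          · simp [hc']
          · intro k l hkl; simp only [hc', if_neg hkl]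
        have h1' : ∀ i, PPath S i (c'.1 i) (projPeer M i τ) := by
          intro i
          by_cases hi : M.src a = i
          · subst hi; simpa [hc'] using hrest
          · have := h1 i
            rw [projPeer_cons, if_neg (by simpa [peerOf] using hi)] at this
            simpa [hc', Function.update_of_ne (Ne.symm hi)] using this
        have h2' : ∀ τ', τ' <+: τ → ∀ i j,
            recvOn M i j τ' <+: c'.2 i j ++ sentOn M i j τ' := by
          intro τ' hτ' i j
          have := h2 (Act.send a :: τ') (List.cons_prefix_cons.mpr ⟨rfl, hτ'⟩) i j
          rw [recvOn_send_cons, sentOn_send_cons] at this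
          by_cases hc : M.src a = i ∧ M.dst a = j
          · obtain ⟨rfl, rfl⟩ := hc
            rw [if_pos ⟨rfl, rfl⟩] at this
            simpa [hc'] using this
          · rw [if_neg hc] at this
            rw [hc']
            simp only
            rw [if_neg (fun h => hc ⟨h.1.symm, h.2.symm⟩)]
            exact this
        obtain ⟨c'', hexec⟩ := ih c' h1' h2'
        exact ⟨c'', Exec.step hstep hexec⟩
    | recv a =>
      have hp := h1 (M.dst a)
      rw [projPeer_cons, if_pos (show peerOf M (Act.recv a) = M.dst a from rfl)] at hp
      cases hp with
      | cons hd hrest =>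
        rename_i q'
        have hhead : [a] <+: c.2 (M.src a) (M.dst a) := by
          have := h2 [Act.recv a] ⟨τ, rfl⟩ (M.src a) (M.dst a)
          rw [recvOn_recv_cons, if_pos ⟨rfl, rfl⟩] at this
          simpa [recvOn, sentOn] using this
        obtain ⟨rest, hrest2⟩ := hhead
        set c' : Config := (Function.update c.1 (M.dst a) q',
          fun k l => if k = M.src a ∧ l = M.dst a then rest else c.2 k l) with hc'
        have hstep : Step M S c (Act.recv a) c' := by
          refine ⟨?_, ?_, ?_, ?_⟩
          · simpa [hc'] using hd
          · intro k hk; simp [hc', Function.update_of_ne hk]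
          · simp [hc', ← hrest2]
          · intro k l hkl; simp only [hc', if_neg hkl]
        have h1' : ∀ i, PPath S i (c'.1 i) (projPeer M i τ) := by
          intro i
          by_cases hi : M.dst a = i
          · subst hi; simpa [hc'] using hrest
          · have := h1 i
            rw [projPeer_cons, if_neg (by simpa [peerOf] using hi)] at this
            simpa [hc', Function.update_of_ne (Ne.symm hi)] using this
        have h2' : ∀ τ', τ' <+: τ → ∀ i j,
            recvOn M i j τ' <+: c'.2 i j ++ sentOn M i j τ' := by
          intro τ' hτ' i j
          have := h2 (Act.recv a :: τ') (List.cons_prefix_cons.mpr ⟨rfl, hτ'⟩) i j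
          rw [recvOn_recv_cons, sentOn_recv_cons] at this
          by_cases hc : M.src a = i ∧ M.dst a = j
          · obtain ⟨rfl, rfl⟩ := hc
            rw [if_pos ⟨rfl, rfl⟩, ← hrest2] at this
            rw [List.cons_append] at this
            have h3 := (List.cons_prefix_cons.mp this).2
            simpa [hc'] using h3
          · rw [if_neg hc] at this
            rw [hc']
            simp only
            rw [if_neg (fun h => hc ⟨h.1.symm, h.2.symm⟩)]
            exact this
        obtain ⟨c'', hexec⟩ := ih c' h1' h2'
        exact ⟨c'', Exec.step hstep hexec⟩

end Aux

/-- τ is a trace of S iff τ is FIFO and every peer projection is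
in the language of the corresponding automaton. -/
theorem traceOf_iff_fifo_and_proj (M : MessageSet) (S : System)
    (hM : M.WF) (hS : S.WF M) (τ : Trace) :
    TraceOf M S τ ↔ (Fifo M τ ∧ ∀ i, projPeer M i τ ∈ Lang S i) := by
  constructor
  · rintro ⟨c, hexec⟩
    constructor
    · intro τ' hτ' i j
      obtain ⟨t, ht⟩ := hτ'
      obtain ⟨c', h1, _⟩ := exec_append (ht ▸ hexec)
      have := exec_buffer h1 i j
      simp only [initConfig, List.nil_append] at this
      exact ⟨c'.2 i j, this.symm⟩
    · intro i
      exact exec_ppath hS hexec i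
  · rintro ⟨hfifo, hproj⟩
    obtain ⟨c, hexec⟩ := exec_of hS τ (initConfig S)
      (fun i => hproj i)
      (fun τ' hτ' i j => by simpa [initConfig] using hfifo τ' hτ' i j)
    exact ⟨c, hexec⟩
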